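/- arXiv:1610.06432 — 9 statements merged into one kernel-verified Lean document; each statement's English description precedes it below -/
import Mathlib

section
/- There does not exist a (v,m,k,λ)-SEDF with v = mk and k > 1. Equivalently: there are no positive integers m, k, λ, v with v = mk, k > 1, and k²(m−1) = λ(v−1). -/
/-!
Since `k ∣ mk`, the modulus `mk - 1` is coprime to `k²`, so the parameter equation forces
`mk - 1 ∣ m - 1`. For `k > 1` this divisor exceeds `m - 1`, hence `m = 1`, and the equation
collapses to `0 = λ (k - 1)`, which is impossible for `λ > 0`.
-/

namespace Nat

theorem coprime_sub_one_of_dvd {k n : ℕ} (hn : 0 < n) (hk : k ∣ n) : Coprime k (n - 1) :=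
  ((coprime_self_sub_right hn).mpr (coprime_one_right n)).coprime_dvd_left hk

theorem mul_sub_one_dvd_sub_one_of_dvd_sq_mul {m k : ℕ} (hmk : 0 < m * k)
    (h : m * k - 1 ∣ k ^ 2 * (m - 1)) : m * k - 1 ∣ m - 1 :=
  ((coprime_sub_one_of_dvd hmk (dvd_mul_left k m)).pow_left 2).symm.dvd_of_dvd_mul_left h

theorem eq_one_of_mul_sub_one_dvd_sub_one {m k : ℕ} (hm : 0 < m) (hk : 1 < k)
    (h : m * k - 1 ∣ m - 1) : m = 1 := by
  have hlt : m - 1 < m * k - 1 := by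
    have : m < m * k := lt_mul_of_one_lt_right hm hk
    omega
  have := eq_zero_of_dvd_of_lt h hlt
  omega

end Nat

theorem stmt_1 (m k lam v : ℕ) (hm : 0 < m) (hk : 1 < k) (hlam : 0 < lam)
    (hv : v = m * k) (heq : k ^ 2 * (m - 1) = lam * (v - 1)) : False := by
  subst hv
  have hdvd : m * k - 1 ∣ k ^ 2 * (m - 1) := ⟨lam, by rw [heq, mul_comm]⟩
  have hm1 : m = 1 :=
    Nat.eq_one_of_mul_sub_one_dvd_sub_one hm hk
      (Nat.mul_sub_one_dvd_sub_one_of_dvd_sq_mul (Nat.mul_pos hm (by omega)) hdvd)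
  subst hm1
  have : 0 < lam * (1 * k - 1) := Nat.mul_pos hlam (by omega)
  omega
end

section
/- Let G be a finite abelian group, χ a non-principal (nontrivial) complex character of G, and D₁,…,Dₘ a (v,m,k,λ)-SEDF in G with λ > 0. Then χ(D_j) ≠ 0 for all 1 ≤ j ≤ m, where χ(D_j) denotes the sum of χ(g) over g ∈ D_j. -/
/-- A `(v,m,k,λ)`-strong external difference family in a finite abelian group `G`:
`m` pairwise disjoint `k`-subsets `D j` of `G`, `|G| = v`, such that for each `j`,
every non-identity `g ∈ G` has exactly `λ` representations `g = x * y⁻¹` with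
`x ∈ D j`, `y ∈ D ℓ`, `ℓ ≠ j`, and the identity has no such representations. -/
def IsSEDF (G : Type) [CommGroup G] [Fintype G] [DecidableEq G]
    (v m k lam : ℕ) (D : Fin m → Finset G) : Prop :=
  Fintype.card G = v ∧
  (∀ j, (D j).card = k) ∧
  (∀ i j : Fin m, i ≠ j → Disjoint (D i) (D j)) ∧
  ∀ (j : Fin m) (g : G),
    (Finset.univ.filter (fun p : Fin m × G × G =>
      p.1 ≠ j ∧ p.2.1 ∈ D j ∧ p.2.2 ∈ D p.1 ∧ p.2.1 * p.2.2⁻¹ = g)).card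
      = if g = 1 then 0 else lam

/-!
Sum `χ(x y⁻¹)` over all external pairs `(x, y) ∈ D j × D ℓ`, `ℓ ≠ j`. Grouping by the
difference `x y⁻¹`, the SEDF condition makes this `λ ∑_{g ≠ 1} χ g = -λ`, since a nontrivial
character sums to zero over `G`. Factoring instead, it is `χ(D j) · ∑_{ℓ ≠ j} χ(D ℓ⁻¹)`, so
`χ(D j) = 0` would force `λ = 0`.
-/

open Finset

theorem Finset.sum_comp_eq_sum_card_filter_nsmul {α β M : Type*} [AddCommMonoid M]
    [Fintype β] [DecidableEq β] (s : Finset α) (f : α → β) (φ : β → M) :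
    ∑ a ∈ s, φ (f a) = ∑ b, #{a ∈ s | f a = b} • φ b := by
  rw [← sum_fiberwise s f]
  refine sum_congr rfl fun b _ => ?_
  rw [← sum_const]
  exact sum_congr rfl fun a ha => by rw [(mem_filter.mp ha).2]

theorem MonoidHom.sum_comp_eq_neg_of_card_filter_eq {G R α : Type*} [Group G] [Fintype G]
    [DecidableEq G] [CommRing R] [IsDomain R] (χ : G →* R) (hχ : χ ≠ 1)
    (s : Finset α) (f : α → G) (lam : ℕ)
    (hcount : ∀ g, #{a ∈ s | f a = g} = if g = 1 then 0 else lam) :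
    ∑ a ∈ s, χ (f a) = -lam := by
  simp_rw [sum_comp_eq_sum_card_filter_nsmul, hcount, ite_smul, zero_smul]
  rw [sum_ite, sum_const_zero, zero_add, filter_ne', sum_erase_eq_sub (mem_univ _),
    ← smul_sum, sum_hom_units_eq_zero χ hχ]
  simp

theorem Finset.sum_filter_ne_mem_mem_mul {ι α R : Type*} [Fintype ι] [DecidableEq ι]
    [Fintype α] [DecidableEq α] [CommSemiring R] (j : ι) (A : Finset α) (D : ι → Finset α)
    (φ ψ : α → R) :
    ∑ p ∈ univ.filter (fun p : ι × α × α => p.1 ≠ j ∧ p.2.1 ∈ A ∧ p.2.2 ∈ D p.1),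
      φ p.2.1 * ψ p.2.2 = (∑ x ∈ A, φ x) * ∑ ℓ with ℓ ≠ j, ∑ y ∈ D ℓ, ψ y := by
  rw [sum_finset_product _ {ℓ | ℓ ≠ j} (fun ℓ => A ×ˢ D ℓ) (by simp), mul_sum]
  exact sum_congr rfl fun ℓ _ => by rw [sum_mul_sum, sum_product]

theorem stmt_4 (G : Type) [CommGroup G] [Fintype G] [DecidableEq G]
    (v m k lam : ℕ) (hlam : 0 < lam) (D : Fin m → Finset G)
    (h : IsSEDF G v m k lam D) (χ : G →* ℂ) (hχ : χ ≠ 1) :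
    ∀ j : Fin m, ∑ g ∈ D j, χ g ≠ 0 := by
  intro j hzero
  obtain ⟨-, -, -, hcount⟩ := h
  set P := univ.filter (fun p : Fin m × G × G => p.1 ≠ j ∧ p.2.1 ∈ D j ∧ p.2.2 ∈ D p.1)
  have hfiber (g : G) : #{p ∈ P | p.2.1 * p.2.2⁻¹ = g} = if g = 1 then 0 else lam := by
    simpa only [P, filter_filter, and_assoc] using hcount j g
  have hsum_neg := χ.sum_comp_eq_neg_of_card_filter_eq hχ P _ lam hfiber
  have hsum_zero : ∑ p ∈ P, χ (p.2.1 * p.2.2⁻¹) = 0 := by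
    simp only [P, map_mul]
    rw [sum_filter_ne_mem_mem_mul j (D j) D χ (χ ·⁻¹), hzero, zero_mul]
  have : (lam : ℂ) = 0 := by linear_combination hsum_neg - hsum_zero
  exact hlam.ne' (by exact_mod_cast this)
end

section
/- Let G be a finite abelian group, χ a nontrivial character of G, and D₁,…,Dₘ a (v,m,k,λ)-SEDF in G with λ > 0. If χ(𝒟) = 0, where 𝒟 = D₁ ∪ ⋯ ∪ Dₘ, then |χ(D_j)|² = λ for all j. -/
open Finset ComplexConjugate

namespace MonoidHom

variable {G : Type*} [Group G] [Finite G]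

lemma norm_apply_eq_one (χ : G →* ℂ) (g : G) : ‖χ g‖ = 1 :=
  Complex.norm_eq_one_of_pow_eq_one (by rw [← map_pow, pow_card_eq_one', map_one])
    Nat.card_pos.ne'

lemma map_inv_eq_conj (χ : G →* ℂ) (g : G) : χ g⁻¹ = conj (χ g) := by
  rw [← Complex.inv_eq_conj (χ.norm_apply_eq_one g)]
  exact eq_inv_of_mul_eq_one_left (by rw [← map_mul, inv_mul_cancel, map_one])

lemma sum_sum_apply_mul_inv (χ : G →* ℂ) (A B : Finset G) :
    ∑ x ∈ A, ∑ y ∈ B, χ (x * y⁻¹) = (∑ x ∈ A, χ x) * conj (∑ y ∈ B, χ y) := by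
  simp only [map_mul, map_inv_eq_conj, map_sum, sum_mul_sum]

end MonoidHom

lemma MonoidHom.sum_apply_eq_neg_of_card_fiber {G R α : Type*} [Group G] [Fintype G]
    [DecidableEq G] [CommRing R] [IsDomain R] {χ : G →* R} (hχ : χ ≠ 1) (s : Finset α)
    (f : α → G) (lam : ℕ) (hfib : ∀ g, #{a ∈ s | f a = g} = if g = 1 then 0 else lam) :
    ∑ a ∈ s, χ (f a) = -lam := by
  rw [← sum_fiberwise s f (fun a => χ (f a))]
  have hfiber_sum : ∀ g, ∑ a ∈ s with f a = g, χ (f a) =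
      lam * χ g - if g = 1 then (lam : R) else 0 := by
    intro g
    rw [sum_congr rfl fun a ha => by rw [(mem_filter.mp ha).2], sum_const, hfib]
    split_ifs with hg <;> simp [hg]
  simp only [hfiber_sum, sum_sub_distrib, ← mul_sum, sum_hom_units_eq_zero χ hχ, sum_ite_eq']
  simp

lemma Finset.sum_filter_mem_prod_prod {ι α β M : Type*} [Fintype ι] [Fintype α] [Fintype β]
    [DecidableEq ι] [DecidableEq α] [DecidableEq β] [AddCommMonoid M] (t : Finset ι) (A : Finset α) (B : ι → Finset β) (F : ι × α × β → M) :
    ∑ p with p.1 ∈ t ∧ p.2.1 ∈ A ∧ p.2.2 ∈ B p.1, F p =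
      ∑ i ∈ t, ∑ x ∈ A, ∑ y ∈ B i, F (i, x, y) := by
  simp [sum_filter, Fintype.sum_prod_type, ite_and]

theorem stmt_5_general (G : Type) [CommGroup G] [Fintype G] [DecidableEq G]
    (v m k lam : ℕ) (D : Fin m → Finset G)
    (h : IsSEDF G v m k lam D) (χ : G →* ℂ) (hχ : χ ≠ 1)
    (h0 : ∑ g ∈ Finset.univ.biUnion D, χ g = 0) :
    ∀ j : Fin m, ‖∑ g ∈ D j, χ g‖ ^ 2 = (lam : ℝ) := by
  obtain ⟨-, -, hdisj, hcount⟩ := h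
  intro j
  have hrest : ∑ ℓ ∈ univ.erase j, ∑ g ∈ D ℓ, χ g = -∑ g ∈ D j, χ g := by
    rw [sum_erase_eq_sub (mem_univ j), ← sum_biUnion fun i _ l _ hil => hdisj i l hil, h0,
      zero_sub]
  have hdiff := χ.sum_apply_eq_neg_of_card_fiber hχ
    {p : Fin m × G × G | p.1 ∈ univ.erase j ∧ p.2.1 ∈ D j ∧ p.2.2 ∈ D p.1}
    (fun p => p.2.1 * p.2.2⁻¹) lam fun g => by
      rw [filter_filter, ← hcount j g]
      simp only [mem_erase, mem_univ, and_true, and_assoc]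
  rw [sum_filter_mem_prod_prod] at hdiff
  simp only [χ.sum_sum_apply_mul_inv, ← mul_sum, ← map_sum, hrest, map_neg, mul_neg,
    Complex.mul_conj, neg_inj] at hdiff
  rw [Complex.sq_norm]
  exact_mod_cast hdiff

theorem stmt_5 (G : Type) [CommGroup G] [Fintype G] [DecidableEq G]
    (v m k lam : ℕ) (hlam : 0 < lam) (D : Fin m → Finset G)
    (h : IsSEDF G v m k lam D) (χ : G →* ℂ) (hχ : χ ≠ 1)
    (h0 : ∑ g ∈ Finset.univ.biUnion D, χ g = 0) :
    ∀ j : Fin m, ‖∑ g ∈ D j, χ g‖ ^ 2 = (lam : ℝ) :=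
  stmt_5_general G v m k lam D h χ hχ h0
end

section
/- Let x₁, x₂, x₃ be nonzero complex numbers satisfying x₁·conj(x₂) + x₁·conj(x₃) = −λ, x₂·conj(x₁) + x₂·conj(x₃) = −λ, and x₃·conj(x₁) + x₃·conj(x₂) = −λ for some real λ > 0, and suppose each x_j = α_j·X for some nonzero complex X and nonzero real numbers α_j. Then a contradiction follows; i.e., no such x₁, x₂, x₃ exist. -/
/-! Writing `x_j = α_j X` makes every product `x_i * conj x_j = α_i α_j |X|²` real, so the three
equations become real ones. Subtracting two of them gives `(α_i - α_j) α_k |X|² = 0`, and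
`α_k |X|² ≠ 0` because the third equation has a nonzero right-hand side; hence all `α_j` agree,
and the first equation reads `2 α² |X|² = -λ < 0`, which is impossible. -/

theorem Complex.ofReal_mul_mul_conj_ofReal_mul (a b : ℝ) (X : ℂ) :
    (a * X) * starRingEnd ℂ (b * X) = ((a * b * Complex.normSq X : ℝ) : ℂ) := by
  rw [map_mul, Complex.conj_ofReal]
  push_cast
  rw [← Complex.mul_conj]
  ring

theorem eq_of_mul_add_mul_eq {a b c r μ : ℝ} (hμ : μ ≠ 0) (ha : a * b * r + a * c * r = μ)
    (hb : b * a * r + b * c * r = μ) (hc : c * a * r + c * b * r = μ) : a = b := by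
  have hcr : c * r ≠ 0 := fun h ↦ hμ (by linear_combination -hc + (a + b) * h)
  have : (a - b) * (c * r) = 0 := by linear_combination ha - hb
  exact sub_eq_zero.mp ((mul_eq_zero.mp this).resolve_right hcr)

theorem false_of_mul_add_mul_eq_of_neg {a b c r μ : ℝ} (hr : 0 ≤ r) (hμ : μ < 0)
    (ha : a * b * r + a * c * r = μ) (hb : b * a * r + b * c * r = μ)
    (hc : c * a * r + c * b * r = μ) : False := by
  obtain rfl : a = b := eq_of_mul_add_mul_eq hμ.ne ha hb hc
  obtain rfl : a = c := eq_of_mul_add_mul_eq (c := a) hμ.ne (by linarith) hc ha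
  linarith [mul_nonneg (mul_self_nonneg a) hr]

theorem stmt_7_general (x₁ x₂ x₃ X : ℂ) (lam : ℝ) (hlam : 0 < lam)
    (α₁ α₂ α₃ : ℝ)
    (he₁ : x₁ = (α₁ : ℂ) * X) (he₂ : x₂ = (α₂ : ℂ) * X) (he₃ : x₃ = (α₃ : ℂ) * X)
    (h1 : x₁ * (starRingEnd ℂ) x₂ + x₁ * (starRingEnd ℂ) x₃ = -(lam : ℂ))
    (h2 : x₂ * (starRingEnd ℂ) x₁ + x₂ * (starRingEnd ℂ) x₃ = -(lam : ℂ))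
    (h3 : x₃ * (starRingEnd ℂ) x₁ + x₃ * (starRingEnd ℂ) x₂ = -(lam : ℂ)) :
    False := by
  subst he₁ he₂ he₃
  simp only [Complex.ofReal_mul_mul_conj_ofReal_mul, ← Complex.ofReal_add, ← Complex.ofReal_neg,
    Complex.ofReal_inj] at h1 h2 h3
  exact false_of_mul_add_mul_eq_of_neg (Complex.normSq_nonneg X) (neg_neg_of_pos hlam) h1 h2 h3

theorem stmt_7 (x₁ x₂ x₃ X : ℂ) (lam : ℝ) (hlam : 0 < lam)
    (hx₁ : x₁ ≠ 0) (hx₂ : x₂ ≠ 0) (hx₃ : x₃ ≠ 0) (hX : X ≠ 0)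
    (α₁ α₂ α₃ : ℝ) (hα₁ : α₁ ≠ 0) (hα₂ : α₂ ≠ 0) (hα₃ : α₃ ≠ 0)
    (he₁ : x₁ = (α₁ : ℂ) * X) (he₂ : x₂ = (α₂ : ℂ) * X) (he₃ : x₃ = (α₃ : ℂ) * X)
    (h1 : x₁ * (starRingEnd ℂ) x₂ + x₁ * (starRingEnd ℂ) x₃ = -(lam : ℂ))
    (h2 : x₂ * (starRingEnd ℂ) x₁ + x₂ * (starRingEnd ℂ) x₃ = -(lam : ℂ))
    (h3 : x₃ * (starRingEnd ℂ) x₁ + x₃ * (starRingEnd ℂ) x₂ = -(lam : ℂ)) :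
    False :=
  stmt_7_general x₁ x₂ x₃ X lam hlam α₁ α₂ α₃ he₁ he₂ he₃ h1 h2 h3
end

section
/- Let m ≥ 4 and let α₁,…,αₘ be nonzero real numbers such that for all distinct indices r, s: α_r·(Σ_{ℓ≠r,s} α_ℓ) = α_s·(Σ_{ℓ≠r,s} α_ℓ). Then the set {α₁,…,αₘ} has at most two distinct values. -/
/-! If `α r ≠ α s`, cancelling the factor in the hypothesis shows that the values outside
`{r, s}` sum to zero, i.e. `α r + α s` equals the total sum `∑ ℓ, α ℓ`. Three pairwise distinct
values `a, b, c` would then give `a + b = a + c`, hence `b = c`. -/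

open Finset

variable {ι R : Type*} [Fintype ι]

theorem card_image_le_two_of_add_eq_of_ne [DecidableEq R] [Add R] [IsLeftCancelAdd R]
    {α : ι → R} (c : R) (hc : ∀ r s, α r ≠ α s → α r + α s = c) :
    (univ.image α).card ≤ 2 := by
  by_contra! hcard
  obtain ⟨_, _, _, ha, hb, hd, hab, had, hbd⟩ := two_lt_card_iff.mp hcard
  obtain ⟨r, -, rfl⟩ := mem_image.mp ha
  obtain ⟨s, -, rfl⟩ := mem_image.mp hb
  obtain ⟨t, -, rfl⟩ := mem_image.mp hd
  exact hbd (add_left_cancel ((hc r s hab).trans (hc r t had).symm))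

theorem add_eq_sum_of_mul_sum_compl_pair_eq [DecidableEq ι] [CommRing R] [IsDomain R]
    {α : ι → R} {r s : ι}
    (h : α r * ∑ ℓ ∈ univ \ {r, s}, α ℓ = α s * ∑ ℓ ∈ univ \ {r, s}, α ℓ) (hrs : α r ≠ α s) :
    α r + α s = ∑ ℓ, α ℓ := by
  have hcompl : ∑ ℓ ∈ univ \ {r, s}, α ℓ = 0 := (mul_eq_mul_right_iff.mp h).resolve_left hrs
  rw [← sum_sdiff (subset_univ {r, s}), hcompl, zero_add, sum_pair (ne_of_apply_ne α hrs)]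

theorem stmt_10_general (m : ℕ) (α : Fin m → ℝ)
    (h : ∀ r s : Fin m, r ≠ s →
      α r * (∑ ℓ ∈ Finset.univ \ {r, s}, α ℓ) =
      α s * (∑ ℓ ∈ Finset.univ \ {r, s}, α ℓ)) :
    (Finset.univ.image α).card ≤ 2 :=
  card_image_le_two_of_add_eq_of_ne (∑ ℓ, α ℓ) fun r s hrs =>
    add_eq_sum_of_mul_sum_compl_pair_eq (h r s (ne_of_apply_ne α hrs)) hrs

theorem stmt_10 (m : ℕ) (hm : 4 ≤ m) (α : Fin m → ℝ) (hα : ∀ j, α j ≠ 0)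
    (h : ∀ r s : Fin m, r ≠ s →
      α r * (∑ ℓ ∈ Finset.univ \ {r, s}, α ℓ) =
      α s * (∑ ℓ ∈ Finset.univ \ {r, s}, α ℓ)) :
    (Finset.univ.image α).card ≤ 2 :=
  stmt_10_general m α h
end

section
/- Let m ≥ 4 even, X ≠ 0 complex, λ > 0 real, and α₁,…,αₘ nonzero reals taking exactly two distinct values α and β, each exactly m/2 times, with x_j := α_j X satisfying Σ_{ℓ≠j} x_j conj(x_ℓ) = −λ for all j and Σ_j α_j = 1. Then a contradiction follows; i.e., an even split is impossible. -/
/-!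
Summing `x_j conj(x_ℓ)` over `ℓ ≠ j` and using `∑ α = 1` turns the hypothesis into
`α_j (1 - α_j) |X|² = -λ` for every `j`. Hence `a (1 - a) = b (1 - b)`, which for `a ≠ b`
forces `a + b = 1`; but then `1 = ∑ α = (m/2)(a + b) = m/2 ≥ 2`.
-/

open Finset

theorem Finset.sum_sdiff_singleton_eq_one_sub {ι : Type*} [Fintype ι] [DecidableEq ι]
    {α : ι → ℝ} (hsum : ∑ j, α j = 1) (j : ι) :
    ∑ ℓ ∈ univ \ {j}, α ℓ = 1 - α j := by
  rw [sum_sdiff_eq_sub (subset_univ _), sum_singleton, hsum]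

theorem Complex.sum_sdiff_singleton_mul_conj {ι : Type*} [Fintype ι] [DecidableEq ι]
    {α : ι → ℝ} (hsum : ∑ j, α j = 1) (X : ℂ) (j : ι) :
    ∑ ℓ ∈ univ \ {j}, ((α j : ℂ) * X) * (starRingEnd ℂ) ((α ℓ : ℂ) * X)
      = ((α j * (1 - α j) * Complex.normSq X : ℝ) : ℂ) := by
  have hterm : ∀ ℓ, ((α j : ℂ) * X) * (starRingEnd ℂ) ((α ℓ : ℂ) * X)
      = (α j : ℂ) * (X * (starRingEnd ℂ) X) * (α ℓ : ℂ) := by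
    intro ℓ
    rw [map_mul, Complex.conj_ofReal]
    ring
  simp only [hterm, ← mul_sum, ← Complex.ofReal_sum, sum_sdiff_singleton_eq_one_sub hsum,
    Complex.mul_conj]
  push_cast
  ring

theorem add_eq_one_of_mul_one_sub_eq {R : Type*} [CommRing R] [NoZeroDivisors R] {a b : R}
    (hab : a ≠ b) (h : a * (1 - a) = b * (1 - b)) : a + b = 1 := by
  have hfactor : (a - b) * (1 - (a + b)) = 0 := by linear_combination h
  rcases mul_eq_zero.mp hfactor with hzero | hzero
  · exact absurd (sub_eq_zero.mp hzero) hab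
  · exact (sub_eq_zero.mp hzero).symm

theorem Finset.sum_eq_card_nsmul_add_card_nsmul {ι M : Type*} [Fintype ι] [AddCommMonoid M]
    [DecidableEq M] {α : ι → M} {a b : M} (hab : a ≠ b) (hval : ∀ j, α j = a ∨ α j = b) :
    ∑ j, α j = #{j | α j = a} • a + #{j | α j = b} • b := by
  have hcompl : univ.filter (fun j => ¬α j = a) = univ.filter (fun j => α j = b) :=
    filter_congr fun j _ => by rcases hval j with h | h <;> simp [h, hab, hab.symm]
  rw [← sum_filter_add_sum_filter_not univ (fun j => α j = a), hcompl,
    sum_congr rfl fun j hj => (mem_filter.mp hj).2,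
    sum_congr rfl fun j hj => (mem_filter.mp hj).2, sum_const, sum_const]

theorem stmt_12_general (m : ℕ) (hm : 4 ≤ m)
    (X : ℂ) (hX : X ≠ 0) (lam : ℝ)
    (α : Fin m → ℝ) (a b : ℝ) (hab : a ≠ b)
    (hval : ∀ j, α j = a ∨ α j = b)
    (hA : (Finset.univ.filter (fun j => α j = a)).card = m / 2)
    (hB : (Finset.univ.filter (fun j => α j = b)).card = m / 2)
    (h : ∀ j : Fin m, ∑ ℓ ∈ Finset.univ \ {j},
      ((α j : ℂ) * X) * (starRingEnd ℂ) ((α ℓ : ℂ) * X) = -(lam : ℂ))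
    (hsum : ∑ j, α j = 1) :
    False := by
  have key : ∀ j, α j * (1 - α j) * Complex.normSq X = -lam := fun j => by
    exact_mod_cast (Complex.sum_sdiff_singleton_mul_conj hsum X j).symm.trans (h j)
  obtain ⟨ja, hja⟩ : (univ.filter fun j => α j = a).Nonempty := by
    rw [← card_pos, hA]; omega
  obtain ⟨jb, hjb⟩ : (univ.filter fun j => α j = b).Nonempty := by
    rw [← card_pos, hB]; omega
  have hsame : a * (1 - a) = b * (1 - b) := by
    have := (key ja).trans (key jb).symm
    rw [(mem_filter.mp hja).2, (mem_filter.mp hjb).2] at this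
    exact mul_right_cancel₀ (Complex.normSq_pos.mpr hX).ne' this
  have hhalf : ((m / 2 : ℕ) : ℝ) = 1 := by
    rw [← hsum, sum_eq_card_nsmul_add_card_nsmul hab hval, hA, hB, nsmul_eq_mul, nsmul_eq_mul,
      ← mul_add, add_eq_one_of_mul_one_sub_eq hab hsame, mul_one]
  have : m / 2 = 1 := by exact_mod_cast hhalf
  omega

theorem stmt_12 (m : ℕ) (hm : 4 ≤ m) (hmeven : Even m)
    (X : ℂ) (hX : X ≠ 0) (lam : ℝ) (hlam : 0 < lam)
    (α : Fin m → ℝ) (hα : ∀ j, α j ≠ 0) (a b : ℝ) (hab : a ≠ b)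
    (hval : ∀ j, α j = a ∨ α j = b)
    (hA : (Finset.univ.filter (fun j => α j = a)).card = m / 2)
    (hB : (Finset.univ.filter (fun j => α j = b)).card = m / 2)
    (h : ∀ j : Fin m, ∑ ℓ ∈ Finset.univ \ {j},
      ((α j : ℂ) * X) * (starRingEnd ℂ) ((α ℓ : ℂ) * X) = -(lam : ℂ))
    (hsum : ∑ j, α j = 1) :
    False :=
  stmt_12_general m hm X hX lam α a b hab hval hA hB h hsum
end

section
/- Suppose there exists a (v,5,k,λ)-SEDF with k > 1, and let χ be a nontrivial character with X := χ(𝒟) ≠ 0, writing χ(D_j) = α_j X with α_j nonzero reals. Then, up to relabeling, exactly two of the α_j equal 2 and the other three equal −1, and 2|X|² = λ. -/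
/-!
Applying χ to the SEDF equation for `D j` gives `χ(D j) · conj(∑_{ℓ ≠ j} χ(D ℓ)) = -λ`, since a
nontrivial character sums to `-1` over `G ∖ {1}`. As the `D j` partition `𝒟`, the `α j` sum to
`1`, so this reads `α j (1 - α j) |X|² = -λ`. Hence all `α j` are roots of one quadratic, taking
values `a` and `1 - a`, and `α j ≠ 0` forces the common value of `α j (1 - α j)` to be negative.
Writing `1 = t a + (5 - t)(1 - a)` with `t` the number of `j` with `α j = a`, the only solutions
with `a ∉ [0, 1]` are `{a, 1 - a} = {2, -1}` with two `α j` equal to `2`.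
-/

open Finset ComplexConjugate

theorem MonoidHom.conj_apply_eq_apply_inv {G : Type*} [Group G] [Finite G] (χ : G →* ℂ) (g : G) :
    conj (χ g) = χ g⁻¹ := by
  have : Fintype G := Fintype.ofFinite G
  have hnorm : ‖χ g‖ = 1 := Complex.norm_eq_one_of_pow_eq_one
    (by rw [← map_pow, pow_card_eq_one, map_one]) Fintype.card_ne_zero
  rw [← Complex.inv_eq_conj hnorm, eq_comm]
  exact eq_inv_of_mul_eq_one_left (by rw [← map_mul, inv_mul_cancel, map_one])

theorem MonoidHom.sum_erase_one_eq_neg_one {G : Type*} [Group G] [Fintype G] [DecidableEq G]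
    (χ : G →* ℂ) (hχ : χ ≠ 1) : ∑ g ∈ univ.erase 1, χ g = -1 := by
  rw [sum_erase_eq_sub (mem_univ _), sum_hom_units_eq_zero χ hχ, map_one, zero_sub]

theorem Finset.card_add_card_and_sum_eq_of_forall_eq_or_eq {ι R : Type*} [Fintype ι]
    [NonAssocSemiring R] [DecidableEq R] {f : ι → R} {a b : R} (hab : a ≠ b)
    (h : ∀ i, f i = a ∨ f i = b) :
    #{i | f i = a} + #{i | f i = b} = Fintype.card ι ∧
      ∑ i, f i = #{i | f i = a} * a + #{i | f i = b} * b := by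
  have hb : univ.filter (f · = b) = univ.filter (¬f · = a) :=
    filter_congr fun i _ => ⟨fun hi ha => hab (ha.symm.trans hi), (h i).resolve_left⟩
  constructor
  · rw [hb, card_filter_add_card_filter_not, card_univ]
  · rw [← sum_filter_add_sum_filter_not univ (f · = a), ← hb,
      sum_congr rfl fun i hi => (mem_filter.1 hi).2, sum_congr rfl fun i hi => (mem_filter.1 hi).2]
    simp only [sum_const, nsmul_eq_mul]

theorem eq_two_or_eq_neg_one_of_sum_eq_one {α : Fin 5 → ℝ} {q : ℝ} (hα : ∀ j, α j ≠ 0)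
    (hsum : ∑ j, α j = 1) (hq : q ≤ 0) (hconst : ∀ j, α j * (1 - α j) = q) (j : Fin 5) :
    α j = 2 ∨ α j = -1 := by
  have hq_neg : q < 0 := by
    refine hq.lt_of_ne fun hq0 => ?_
    have hone : ∀ j, α j = 1 := fun j => by
      have := hconst j
      rw [hq0] at this
      linarith [(mul_eq_zero.1 this).resolve_left (hα j)]
    simp [hone] at hsum
  set a := α 0
  have hdich : ∀ j, α j = a ∨ α j = 1 - a := fun j => by
    have : (α j - a) * (α j - (1 - a)) = 0 := by linear_combination hconst 0 - hconst j
    rcases mul_eq_zero.1 this with h | h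
    · exact .inl (by linarith)
    · exact .inr (by linarith)
  have hne : a ≠ 1 - a := fun h => by nlinarith [hconst 0]
  obtain ⟨hcard, hsum'⟩ := card_add_card_and_sum_eq_of_forall_eq_or_eq hne hdich
  have ha : a = 2 ∨ a = -1 := by
    rw [Fintype.card_fin] at hcard
    rw [hsum] at hsum'
    generalize #{i | α i = a} = t, #{i | α i = 1 - a} = s at hcard hsum'
    obtain rfl : s = 5 - t := by omega
    have ht : t ≤ 5 := by omega
    interval_cases t <;> norm_num at hsum'
    all_goals first | (left; linarith) | (right; linarith) | (exfalso; nlinarith [hconst 0])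
  rcases hdich j with h | h <;> rcases ha with ha | ha <;> rw [h, ha] <;> norm_num

theorem card_eq_two_and_card_eq_three_of_forall_eq_two_or_eq_neg_one {α : Fin 5 → ℝ}
    (hsum : ∑ j, α j = 1) (h : ∀ j, α j = 2 ∨ α j = -1) :
    #{j | α j = 2} = 2 ∧ #{j | α j = -1} = 3 := by
  obtain ⟨hcard, hsum'⟩ := card_add_card_and_sum_eq_of_forall_eq_or_eq (by norm_num) h
  rw [Fintype.card_fin] at hcard
  rw [hsum] at hsum'
  have : (#{j | α j = 2} : ℝ) = 2 := by
    have : (#{j | α j = 2} + #{j | α j = -1} : ℝ) = 5 := by exact_mod_cast hcard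
    linarith
  norm_cast at this
  omega

namespace IsSEDF

variable {G : Type} [CommGroup G] [Fintype G] [DecidableEq G] {v m k lam : ℕ}
  {D : Fin m → Finset G}

theorem sum_sum_sum_mul_inv {M : Type*} [AddCommMonoid M] (h : IsSEDF G v m k lam D)
    (j : Fin m) (f : G → M) :
    ∑ ℓ ∈ univ.erase j, ∑ x ∈ D j, ∑ y ∈ D ℓ, f (x * y⁻¹) = lam • ∑ g ∈ univ.erase 1, f g := by
  set T := univ.filter (fun p : Fin m × G × G => p.1 ≠ j ∧ p.2.1 ∈ D j ∧ p.2.2 ∈ D p.1)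
  have hT : ∑ p ∈ T, f (p.2.1 * p.2.2⁻¹) =
      ∑ ℓ ∈ univ.erase j, ∑ x ∈ D j, ∑ y ∈ D ℓ, f (x * y⁻¹) := by
    rw [sum_finset_product T (univ.erase j) (fun ℓ => D j ×ˢ D ℓ) (by simp [T])]
    simp_rw [sum_product]
  have hfibre : ∀ g, #{p ∈ T | p.2.1 * p.2.2⁻¹ = g} = if g = 1 then 0 else lam := fun g => by
    rw [← h.2.2.2 j g, filter_filter]
    simp only [and_assoc]
  rw [← hT, ← sum_fiberwise' T (fun p => p.2.1 * p.2.2⁻¹) f]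
  simp only [sum_const, hfibre, ite_smul, zero_smul, sum_ite, smul_sum, smul_zero, zero_add]
  rw [filter_ne']

theorem sum_char_mul_conj_char_eq_neg (h : IsSEDF G v m k lam D) {χ : G →* ℂ} (hχ : χ ≠ 1)
    (j : Fin m) :
    ∑ ℓ ∈ univ.erase j, (∑ x ∈ D j, χ x) * conj (∑ y ∈ D ℓ, χ y) = -lam := by
  simp_rw [map_sum, χ.conj_apply_eq_apply_inv, sum_mul_sum, ← map_mul]
  rw [h.sum_sum_sum_mul_inv j χ, χ.sum_erase_one_eq_neg_one hχ, nsmul_eq_mul, mul_neg_one]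

theorem sum_coeff_eq_one (h : IsSEDF G v m k lam D) {χ : G →* ℂ} {X : ℂ}
    (hXdef : X = ∑ g ∈ univ.biUnion D, χ g) (hX : X ≠ 0) {α : Fin m → ℝ}
    (hαdef : ∀ j, ∑ g ∈ D j, χ g = (α j : ℂ) * X) : ∑ j, α j = 1 := by
  have : (∑ j, (α j : ℂ)) * X = 1 * X := by
    calc (∑ j, (α j : ℂ)) * X = ∑ j, ∑ g ∈ D j, χ g := by simp_rw [sum_mul, hαdef]
      _ = 1 * X := by rw [one_mul, hXdef, sum_biUnion fun i _ j _ hij => h.2.2.1 i j hij]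
  exact_mod_cast mul_right_cancel₀ hX this

theorem coeff_mul_one_sub_coeff_mul_norm_sq (h : IsSEDF G v m k lam D) {χ : G →* ℂ}
    (hχ : χ ≠ 1) {X : ℂ} (hXdef : X = ∑ g ∈ univ.biUnion D, χ g) (hX : X ≠ 0)
    {α : Fin m → ℝ} (hαdef : ∀ j, ∑ g ∈ D j, χ g = (α j : ℂ) * X) (j : Fin m) :
    α j * (1 - α j) * ‖X‖ ^ 2 = -lam := by
  have hrest : ∑ ℓ ∈ univ.erase j, α ℓ = 1 - α j := by
    rw [sum_erase_eq_sub (mem_univ j), h.sum_coeff_eq_one hXdef hX hαdef]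
  have hchar := h.sum_char_mul_conj_char_eq_neg hχ j
  simp_rw [hαdef, map_mul, Complex.conj_ofReal, mul_mul_mul_comm _ X, ← sum_mul, ← mul_sum,
    Complex.mul_conj', ← Complex.ofReal_sum, hrest] at hchar
  exact_mod_cast hchar

end IsSEDF

theorem stmt_14_general (G : Type) [CommGroup G] [Fintype G] [DecidableEq G]
    (v k lam : ℕ) (D : Fin 5 → Finset G)
    (h : IsSEDF G v 5 k lam D) (χ : G →* ℂ) (hχ : χ ≠ 1)
    (X : ℂ) (hXdef : X = ∑ g ∈ Finset.univ.biUnion D, χ g) (hX : X ≠ 0)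
    (α : Fin 5 → ℝ) (hα : ∀ j, α j ≠ 0)
    (hαdef : ∀ j, ∑ g ∈ D j, χ g = (α j : ℂ) * X) :
    (Finset.univ.filter (fun j => α j = 2)).card = 2 ∧
    (Finset.univ.filter (fun j => α j = -1)).card = 3 ∧
    2 * ‖X‖ ^ 2 = (lam : ℝ) := by
  have hsum := h.sum_coeff_eq_one hXdef hX hαdef
  have hquad := h.coeff_mul_one_sub_coeff_mul_norm_sq hχ hXdef hX hαdef
  have hvalues : ∀ j, α j = 2 ∨ α j = -1 :=
    eq_two_or_eq_neg_one_of_sum_eq_one (q := -(lam / ‖X‖ ^ 2)) hα hsum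
      (neg_nonpos.2 (by positivity)) fun j => by field_simp; linarith [hquad j]
  obtain ⟨h2, h3⟩ := card_eq_two_and_card_eq_three_of_forall_eq_two_or_eq_neg_one hsum hvalues
  obtain ⟨j, hj⟩ := card_pos.1 (h2 ▸ two_pos : 0 < #{j | α j = 2})
  have hquad_j := hquad j
  rw [(mem_filter.1 hj).2] at hquad_j
  exact ⟨h2, h3, by linarith⟩

theorem stmt_14 (G : Type) [CommGroup G] [Fintype G] [DecidableEq G]
    (v k lam : ℕ) (hk : 1 < k) (D : Fin 5 → Finset G)
    (h : IsSEDF G v 5 k lam D) (χ : G →* ℂ) (hχ : χ ≠ 1)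
    (X : ℂ) (hXdef : X = ∑ g ∈ Finset.univ.biUnion D, χ g) (hX : X ≠ 0)
    (α : Fin 5 → ℝ) (hα : ∀ j, α j ≠ 0)
    (hαdef : ∀ j, ∑ g ∈ D j, χ g = (α j : ℂ) * X) :
    (Finset.univ.filter (fun j => α j = 2)).card = 2 ∧
    (Finset.univ.filter (fun j => α j = -1)).card = 3 ∧
    2 * ‖X‖ ^ 2 = (lam : ℝ) :=
  stmt_14_general G v k lam D h χ hχ X hXdef hX α hα hαdef
end

section
/- (Lam–Leung, two-prime case, cardinality version) Let p and q be distinct primes, n = pq, ω a primitive n-th root of unity, and S ⊆ ℤ/nℤ a subset with Σ_{a∈S} ω^a = 0. Then p ∣ |S| or q ∣ |S|. -/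
/-!
Since `∑_{a ∈ S} X^a` vanishes at `ω`, it vanishes at every primitive `pq`-th root of unity, in
particular at `αβ` for all primitive `p`-th roots `α` and `q`-th roots `β`. Through the Chinese
remainder theorem, `S` becomes a set `T` of cells of a `p × q` grid with
`∑_{(i,j) ∈ T} α^i β^j = 0` for all such `α, β`. Averaging over all of them, using that the
sum of `α^k` over the primitive `p`-th roots `α` is `p - 1` or `-1` according as `p ∣ k` or
not, gives `pq·[(i,j) ∈ T] = p·#(row i ∩ T) + q·#(column j ∩ T) - #T` for every cell. Hence
`[(i,j) ∈ T] + [(i',j') ∈ T] = [(i',j) ∈ T] + [(i,j') ∈ T]`, and a `0/1` matrix with this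
property has all rows equal or all columns equal: `T` is a union of full columns or full rows.
-/

open Finset Polynomial

variable {K : Type*} [Field K]

namespace IsPrimitiveRoot

theorem mul_of_coprime {M : Type*} [CommMonoid M] {α β : M} {p q : ℕ}
    (hα : IsPrimitiveRoot α p) (hβ : IsPrimitiveRoot β q) (hpq : p.Coprime q) :
    IsPrimitiveRoot (α * β) (p * q) := by
  rw [IsPrimitiveRoot.iff_orderOf, (Commute.all α β).orderOf_mul_eq_mul_orderOf_of_coprime,
    ← hα.eq_orderOf, ← hβ.eq_orderOf]
  rwa [← hα.eq_orderOf, ← hβ.eq_orderOf]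

theorem pow_of_mem_Ico {M : Type*} [CommMonoid M] {ζ : M} {n i : ℕ} (hζ : IsPrimitiveRoot ζ n)
    (hn : n.Prime) (hi : i ∈ Ico 1 n) : IsPrimitiveRoot (ζ ^ i) n :=
  hζ.pow_of_coprime i (hn.coprime_iff_not_dvd.mpr
    (Nat.not_dvd_of_pos_of_lt (mem_Ico.mp hi).1 (mem_Ico.mp hi).2)).symm

theorem sum_Ico_pow_zpow {ζ : K} {n : ℕ} (hζ : IsPrimitiveRoot ζ n) (hn : 0 < n) (k : ℤ) :
    ∑ i ∈ Ico 1 n, (ζ ^ i) ^ k = if (n : ℤ) ∣ k then (n : K) - 1 else -1 := by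
  have hgeom : ∑ i ∈ range n, (ζ ^ k) ^ i = if (n : ℤ) ∣ k then (n : K) else 0 := by
    split_ifs with hk
    · simp [(hζ.zpow_eq_one_iff_dvd k).mpr hk]
    · rw [geom_sum_eq (mt (hζ.zpow_eq_one_iff_dvd k).mp hk), ← zpow_natCast, ← zpow_mul,
        mul_comm, zpow_mul, zpow_natCast, hζ.pow_eq_one, one_zpow, sub_self, zero_div]
  rw [range_eq_Ico, sum_eq_sum_Ico_succ_bot hn] at hgeom
  have hswap (i : ℕ) : (ζ ^ i) ^ k = (ζ ^ k) ^ i := by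
    rw [← zpow_natCast, ← zpow_natCast, ← zpow_mul, ← zpow_mul, mul_comm]
  simp_rw [hswap]
  split_ifs at hgeom ⊢ <;> linear_combination hgeom

theorem sum_pow_eq_zero_of_sum_pow_eq_zero [CharZero K] {ζ η : K} {n : ℕ} (hn : 0 < n)
    (hζ : IsPrimitiveRoot ζ n) (hη : IsPrimitiveRoot η n) {ι : Type*} (s : Finset ι)
    (e : ι → ℕ) (h : ∑ i ∈ s, ζ ^ e i = 0) : ∑ i ∈ s, η ^ e i = 0 := by
  have hdvd : minpoly ℚ η ∣ ∑ i ∈ s, X ^ e i := by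
    rw [← cyclotomic_eq_minpoly_rat hη hn, cyclotomic_eq_minpoly_rat hζ hn]
    exact minpoly.dvd ℚ ζ (by simpa using h)
  simpa using aeval_eq_zero_of_dvd_aeval_eq_zero hdvd (minpoly.aeval ℚ η)

end IsPrimitiveRoot

theorem pow_val_eq_pow_val_cast {M : Type*} [Monoid M] {α : M} {m n : ℕ} [NeZero n]
    (hα : α ^ m = 1) (c : ZMod n) : α ^ c.val = α ^ (c.cast : ZMod m).val := by
  rw [← ZMod.natCast_val, ZMod.val_natCast, ← pow_eq_pow_mod _ hα]

theorem ZMod.natCast_dvd_val_sub_val_iff {m : ℕ} [NeZero m] (u v : ZMod m) :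
    (m : ℤ) ∣ (u.val - v.val : ℤ) ↔ u = v := by
  rw [← ZMod.intCast_eq_intCast_iff_dvd_sub]
  simp [eq_comm]

theorem sum_ite_mul_ite_eq_zero_of_sum_pow_mul_pow_eq_zero {p q : ℕ} (hp : p.Prime)
    (hq : q.Prime) {α β : K} (hα : IsPrimitiveRoot α p) (hβ : IsPrimitiveRoot β q)
    (T : Finset (ZMod p × ZMod q))
    (hT : ∀ α' β' : K, IsPrimitiveRoot α' p → IsPrimitiveRoot β' q →
      ∑ y ∈ T, α' ^ y.1.val * β' ^ y.2.val = 0)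
    (x : ZMod p × ZMod q) :
    ∑ y ∈ T, (if y.1 = x.1 then (p : K) - 1 else -1) * (if y.2 = x.2 then (q : K) - 1 else -1)
      = 0 := by
  have := NeZero.of_pos hp.pos
  have := NeZero.of_pos hq.pos
  calc
    _ = ∑ y ∈ T, (∑ i ∈ Ico 1 p, (α ^ i) ^ ((y.1.val : ℤ) - x.1.val)) *
          ∑ j ∈ Ico 1 q, (β ^ j) ^ ((y.2.val : ℤ) - x.2.val) := by
      simp only [hα.sum_Ico_pow_zpow hp.pos, hβ.sum_Ico_pow_zpow hq.pos,
        ZMod.natCast_dvd_val_sub_val_iff]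
    _ = ∑ i ∈ Ico 1 p, ∑ j ∈ Ico 1 q, ((α ^ i) ^ x.1.val * (β ^ j) ^ x.2.val)⁻¹ *
          ∑ y ∈ T, (α ^ i) ^ y.1.val * (β ^ j) ^ y.2.val := by
      simp_rw [sum_mul_sum, mul_sum]
      rw [sum_comm]
      refine sum_congr rfl fun i hi => ?_
      rw [sum_comm]
      refine sum_congr rfl fun j hj => sum_congr rfl fun y _ => ?_
      rw [zpow_sub₀ (pow_ne_zero _ (hα.ne_zero hp.ne_zero)),
        zpow_sub₀ (pow_ne_zero _ (hβ.ne_zero hq.ne_zero))]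
      simp only [zpow_natCast]
      field_simp
    _ = 0 := sum_eq_zero fun i hi => sum_eq_zero fun j hj => by
      rw [hT _ _ (hα.pow_of_mem_Ico hp hi) (hβ.pow_of_mem_Ico hq hj), mul_zero]

section Grid

variable {ι κ : Type*}

theorem sum_ite_mul_ite {R : Type*} [CommRing R] [DecidableEq ι] [DecidableEq κ]
    (T : Finset (ι × κ)) (x : ι × κ) (a b : R) :
    ∑ y ∈ T, (if y.1 = x.1 then a - 1 else -1) * (if y.2 = x.2 then b - 1 else -1) =
      a * b * (if x ∈ T then 1 else 0) - a * #{y ∈ T | y.1 = x.1} - b * #{y ∈ T | y.2 = x.2}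
        + #T := by
  have hpoint (y : ι × κ) :
      (if y.1 = x.1 then a - 1 else -1) * (if y.2 = x.2 then b - 1 else -1) =
        a * b * (if y = x then 1 else 0) - a * (if y.1 = x.1 then 1 else 0)
          - b * (if y.2 = x.2 then 1 else 0) + 1 := by
    by_cases h1 : y.1 = x.1 <;> by_cases h2 : y.2 = x.2 <;> simp [h1, h2, Prod.ext_iff] <;> ring
  simp only [hpoint, sum_add_distrib, sum_sub_distrib, ← mul_sum, sum_ite_eq', sum_boole,
    sum_const, nsmul_one]

theorem forall_eq_or_forall_eq_of_add_eq_add (g : ι → κ → ℤ)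
    (h01 : ∀ i j, g i j = 0 ∨ g i j = 1)
    (hrect : ∀ i i' j j', g i j + g i' j' = g i' j + g i j') :
    (∀ i i' j, g i j = g i' j) ∨ ∀ i j j', g i j = g i j' := by
  by_contra! ⟨⟨i₀, i₁, j, hj⟩, i, j₀, j₁, hi⟩
  -- rows `i₀` and `i₁` differ by the same `±1` in every column, so row `i₀` is constant
  have hrow (j' : κ) : g i₀ j' = g i₀ j := by
    have := hrect i₀ i₁ j j'
    have := h01 i₀ j; have := h01 i₁ j; have := h01 i₀ j'; have := h01 i₁ j'
    omega
  have := hrect i i₀ j₀ j₁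
  have := hrow j₀
  have := hrow j₁
  omega

theorem card_left_dvd_card_of_forall_mem [Fintype ι] [DecidableEq ι] [DecidableEq κ]
    (T : Finset (ι × κ)) (hT : ∀ i i' j, (i, j) ∈ T → (i', j) ∈ T) :
    Fintype.card ι ∣ #T := by
  have : T = univ ×ˢ T.image Prod.snd := by
    ext ⟨i, j⟩
    simp only [mem_product, mem_univ, mem_image, Prod.exists, exists_eq_right, true_and]
    exact ⟨fun h => ⟨i, h⟩, fun ⟨i', h⟩ => hT i' i j h⟩
  rw [this, card_product, card_univ]
  exact dvd_mul_right _ _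

theorem card_dvd_or_card_dvd_of_indicator_identity [Fintype ι] [Fintype κ] [DecidableEq ι]
    [DecidableEq κ] (T : Finset (ι × κ))
    (hT : ∀ x : ι × κ, (Fintype.card ι * Fintype.card κ : ℤ) * (if x ∈ T then 1 else 0)
      - Fintype.card ι * #{y ∈ T | y.1 = x.1} - Fintype.card κ * #{y ∈ T | y.2 = x.2}
      + #T = 0) :
    Fintype.card ι ∣ #T ∨ Fintype.card κ ∣ #T := by
  set g : ι → κ → ℤ := fun i j => if (i, j) ∈ T then 1 else 0
  have hrect (i i' j j') : g i j + g i' j' = g i' j + g i j' := by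
    have : (Fintype.card ι * Fintype.card κ : ℤ) ≠ 0 := by
      have := Fintype.card_pos_iff.mpr ⟨i⟩
      have := Fintype.card_pos_iff.mpr ⟨j⟩
      positivity
    apply mul_left_cancel₀ this
    linear_combination hT (i, j) + hT (i', j') - hT (i', j) - hT (i, j')
  have h01 (i j) : g i j = 0 ∨ g i j = 1 := by
    by_cases h : (i, j) ∈ T <;> simp [g, h]
  rcases forall_eq_or_forall_eq_of_add_eq_add g h01 hrect with h | h
  · left
    refine card_left_dvd_card_of_forall_mem T fun i i' j hij => ?_
    simpa [g, hij] using h i i' j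
  · right
    rw [← card_map (Equiv.prodComm ι κ).toEmbedding]
    refine card_left_dvd_card_of_forall_mem _ fun j j' i hij => ?_
    simp only [mem_map_equiv, Equiv.prodComm_symm, Equiv.prodComm_apply,
      Prod.swap_prod_mk] at hij ⊢
    simpa [g, hij] using h i j j'

end Grid

theorem stmt_16 (p q : ℕ) (hp : p.Prime) (hq : q.Prime) (hpq : p ≠ q)
    (ω : ℂ) (hω : IsPrimitiveRoot ω (p * q))
    (S : Finset (ZMod (p * q))) (h : ∑ a ∈ S, ω ^ a.val = 0) :
    p ∣ S.card ∨ q ∣ S.card := by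
  have := NeZero.of_pos hp.pos
  have := NeZero.of_pos hq.pos
  have hn : 0 < p * q := Nat.mul_pos hp.pos hq.pos
  have hcop : p.Coprime q := (Nat.coprime_primes hp hq).mpr hpq
  set T := S.map (ZMod.chineseRemainder hcop).toEquiv.toEmbedding
  have hT (α β : ℂ) (hα : IsPrimitiveRoot α p) (hβ : IsPrimitiveRoot β q) :
      ∑ y ∈ T, α ^ y.1.val * β ^ y.2.val = 0 := by
    rw [sum_map]
    convert hω.sum_pow_eq_zero_of_sum_pow_eq_zero hn (hα.mul_of_coprime hβ hcop) S _ h using 2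
      with c
    simp [mul_pow, pow_val_eq_pow_val_cast hα.pow_eq_one c,
      pow_val_eq_pow_val_cast hβ.pow_eq_one c, ZMod.chineseRemainder]
  have hα : IsPrimitiveRoot (ω ^ q) p := hω.pow hn (mul_comm p q)
  have hβ : IsPrimitiveRoot (ω ^ p) q := hω.pow hn rfl
  have hcount (x : ZMod p × ZMod q) : (p * q : ℤ) * (if x ∈ T then 1 else 0)
      - p * #{y ∈ T | y.1 = x.1} - q * #{y ∈ T | y.2 = x.2} + #T = 0 := by
    exact_mod_cast (sum_ite_mul_ite T x (p : ℂ) q).symm.trans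
      (sum_ite_mul_ite_eq_zero_of_sum_pow_mul_pow_eq_zero hp hq hα hβ T hT x)
  simpa [T, ZMod.card] using
    card_dvd_or_card_dvd_of_indicator_identity T (by simpa only [ZMod.card] using hcount)
end

section
/- Suppose there exists a (v,m,k,λ)-SEDF with v = pq (p, q distinct primes), k > 1, m > 2, p ∣ k, and km < v. Then k > p(v−1)/q, and consequently p/q ≤ 1/5 + 1/(5(v−1)). -/
open Finset ComplexConjugate

theorem sum_ne_one_of_mul_sub_one_eq {n : ℕ} (hn : n = 3 ∨ n = 4) {c : Fin n → ℝ} {ν : ℝ}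
    (hν : 0 < ν) (hc : ∀ j, c j * (c j - 1) = ν) : ∑ j, c j ≠ 1 := by
  obtain ⟨r, hr, hroot⟩ : ∃ r, r * (r - 1) = ν ∧ ∀ j, c j = r ∨ c j = 1 - r := by
    have h0 : 0 < n := by omega
    refine ⟨c ⟨0, h0⟩, hc _, fun j => ?_⟩
    have : (c j - c ⟨0, h0⟩) * (c j + c ⟨0, h0⟩ - 1) = 0 := by
      linear_combination hc j - hc ⟨0, h0⟩
    rcases mul_eq_zero.1 this with h | h
    · exact .inl (by linarith)
    · exact .inr (by linarith)
  rcases hn with rfl | rfl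
  · rw [Fin.sum_univ_three]
    rcases hroot 0 with h0 | h0 <;> rcases hroot 1 with h1 | h1 <;>
      rcases hroot 2 with h2 | h2 <;>
      · rw [h0, h1, h2]; intro; nlinarith
  · rw [Fin.sum_univ_four]
    rcases hroot 0 with h0 | h0 <;> rcases hroot 1 with h1 | h1 <;>
      rcases hroot 2 with h2 | h2 <;> rcases hroot 3 with h3 | h3 <;>
      · rw [h0, h1, h2, h3]; intro; nlinarith

theorem sum_eq_zero_of_mul_conj_sum_sub {n : ℕ} (hn : n = 3 ∨ n = 4) {a : Fin n → ℂ} {μ : ℝ}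
    (hμ : 0 < μ) (h : ∀ j, a j * conj (∑ i, a i - a j) = -μ) : ∑ i, a i = 0 := by
  set T := ∑ i, a i with hT
  by_contra hT0
  have hnT : 0 < Complex.normSq T := Complex.normSq_pos.2 hT0
  set c : Fin n → ℝ := fun j => (Complex.normSq (a j) - μ) / Complex.normSq T
  have hac : ∀ j, a j = c j * T := by
    intro j
    have hj := h j
    rw [map_sub, mul_sub, Complex.mul_conj] at hj
    have : (Complex.normSq T : ℂ) ≠ 0 := by exact_mod_cast hnT.ne'
    simp only [c]
    push_cast
    rw [div_mul_eq_mul_div, eq_div_iff this, ← Complex.mul_conj]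
    linear_combination T * hj
  have hsum : ∑ j, c j = 1 := by
    have : ((∑ j, c j : ℝ) : ℂ) * T = 1 * T := by
      push_cast
      rw [sum_mul, one_mul, ← sum_congr rfl fun j _ => hac j]
    exact_mod_cast mul_right_cancel₀ hT0 this
  refine sum_ne_one_of_mul_sub_one_eq hn (div_pos hμ hnT) (fun j => ?_) hsum
  have hj := h j
  have hsub : T - c j * T = ((1 - c j : ℝ) : ℂ) * T := by push_cast; ring
  rw [hac j, hsub, map_mul, Complex.conj_ofReal, mul_mul_mul_comm, Complex.mul_conj] at hj
  have hj' : c j * (1 - c j) * Complex.normSq T = -μ := by exact_mod_cast hj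
  field_simp
  linarith

theorem sum_addChar_ofMul_eq_zero {G : Type*} [CommGroup G] [Fintype G]
    {ψ : AddChar (Additive G) ℂ} (hψ : ψ ≠ 0) :
    ∑ g : G, ψ (Additive.ofMul g) = 0 :=
  (Fintype.sum_equiv Additive.ofMul _ _ fun _ => rfl).trans
    (AddChar.sum_eq_zero_iff_ne_zero.2 hψ)

section

variable {G : Type} [CommGroup G] [Fintype G] [DecidableEq G] {v m k lam : ℕ}
  {D : Fin m → Finset G}

theorem IsSEDF.sum_mul_inv {M : Type*} [AddCommMonoid M] (h : IsSEDF G v m k lam D)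
    (j : Fin m) (f : G → M) :
    ∑ ℓ ∈ univ.erase j, ∑ x ∈ D j, ∑ y ∈ D ℓ, f (x * y⁻¹) =
      ∑ g, (if g = 1 then 0 else lam) • f g := by
  calc ∑ ℓ ∈ univ.erase j, ∑ x ∈ D j, ∑ y ∈ D ℓ, f (x * y⁻¹)
      = ∑ t ∈ univ.filter (fun t : Fin m × G × G => t.1 ≠ j ∧ t.2.1 ∈ D j ∧ t.2.2 ∈ D t.1),
          f (t.2.1 * t.2.2⁻¹) := by
        rw [sum_filter, Fintype.sum_prod_type]
        simp only [Fintype.sum_prod_type, ite_and, sum_ite_irrel, sum_const_zero, sum_ite_mem_eq]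
        rw [← sum_filter, filter_ne']
    _ = ∑ g, ∑ t ∈ (univ.filter (fun t : Fin m × G × G =>
          t.1 ≠ j ∧ t.2.1 ∈ D j ∧ t.2.2 ∈ D t.1)).filter (fun t => t.2.1 * t.2.2⁻¹ = g), f g :=
        (sum_fiberwise' _ _ _).symm
    _ = _ := by
        refine sum_congr rfl fun g _ => ?_
        rw [sum_const, filter_filter, ← h.2.2.2 j g]
        simp only [and_assoc]

theorem IsSEDF.pred_mul_sq_eq (h : IsSEDF G v m k lam D) (hm : 0 < m) :
    (m - 1) * k ^ 2 = (v - 1) * lam := by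
  have := h.sum_mul_inv ⟨0, hm⟩ (fun _ => 1)
  simp only [sum_const, smul_eq_mul, mul_one, card_erase_of_mem (mem_univ _), card_univ,
    Fintype.card_fin, h.2.1] at this
  rw [sum_ite, sum_const_zero, zero_add, sum_const, filter_ne', card_erase_of_mem (mem_univ _),
    card_univ, h.1, smul_eq_mul] at this
  rw [← this]
  ring

theorem IsSEDF.lam_pos (h : IsSEDF G v m k lam D) (hk : 0 < k) (hm : 1 < m) : 0 < lam := by
  have hcount := h.pred_mul_sq_eq (by omega)
  have : 0 < (m - 1) * k ^ 2 := Nat.mul_pos (by omega) (by positivity)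
  exact Nat.pos_of_ne_zero fun h0 => by simp [h0] at hcount; omega

def charSum (ψ : AddChar (Additive G) ℂ) (S : Finset G) : ℂ :=
  ∑ x ∈ S, ψ (Additive.ofMul x)

theorem IsSEDF.charSum_mul_conj (h : IsSEDF G v m k lam D) {ψ : AddChar (Additive G) ℂ}
    (hψ : ψ ≠ 0) (j : Fin m) :
    charSum ψ (D j) * conj (∑ i, charSum ψ (D i) - charSum ψ (D j)) = -lam := by
  have hmul : ∀ x y : G, ψ (.ofMul (x * y⁻¹)) = ψ (.ofMul x) * conj (ψ (.ofMul y)) := by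
    intro x y
    rw [ofMul_mul, ofMul_inv, AddChar.map_add_eq_mul, AddChar.map_neg_eq_conj]
  have := h.sum_mul_inv j (fun g => ψ (.ofMul g))
  simp only [hmul, ← mul_sum, ← sum_mul, ← map_sum] at this
  rw [← sum_erase_eq_sub (mem_univ j)]
  refine this.trans ?_
  rw [← sum_erase_add _ _ (mem_univ 1), if_pos rfl, zero_smul, add_zero,
    sum_congr rfl fun g hg => by rw [if_neg (ne_of_mem_erase hg)], ← smul_sum,
    sum_erase_eq_sub (mem_univ _), sum_addChar_ofMul_eq_zero hψ, ofMul_one,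
    AddChar.map_zero_eq_one, zero_sub, smul_neg, nsmul_eq_mul, mul_one]

theorem eq_empty_of_charSum_eq_zero {S : Finset G}
    (hS : ∀ ψ : AddChar (Additive G) ℂ, ψ ≠ 0 → charSum ψ S = 0) (hSG : S ≠ univ) : S = ∅ := by
  obtain ⟨g, hg⟩ : ∃ g, g ∉ S := by
    by_contra! hall
    exact hSG (eq_univ_of_forall hall)
  have hshift : ∀ ψ : AddChar (Additive G) ℂ, charSum ψ S * ψ (-.ofMul g) =
      ∑ x ∈ S, ψ (.ofMul x - .ofMul g) := fun ψ => by
    simp only [charSum, sum_mul, sub_eq_add_neg, AddChar.map_add_eq_mul]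
  have horth : ∑ ψ : AddChar (Additive G) ℂ, charSum ψ S * ψ (-.ofMul g) = 0 := by
    simp only [hshift]
    rw [sum_comm]
    refine sum_eq_zero fun x hx => AddChar.sum_apply_eq_zero_iff_ne_zero.2 ?_
    rw [sub_ne_zero]
    exact fun hxg => hg (Additive.ofMul.injective hxg ▸ hx)
  rw [sum_eq_single 0 (fun ψ _ hψ => by rw [hS ψ hψ, zero_mul]) (by simp)] at horth
  simpa [charSum] using horth

theorem IsSEDF.five_le (h : IsSEDF G v m k lam D) (hk : 0 < k) (hm : 2 < m) (hkm : k * m < v) :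
    5 ≤ m := by
  by_contra! hm5
  have hdisj : ((univ : Finset (Fin m)) : Set (Fin m)).PairwiseDisjoint D :=
    fun i _ j _ hij => h.2.2.1 i j hij
  have hcard : (univ.biUnion D).card = k * m := by
    rw [card_biUnion hdisj]
    simp [h.2.1, mul_comm]
  have hS : ∀ ψ : AddChar (Additive G) ℂ, ψ ≠ 0 → charSum ψ (univ.biUnion D) = 0 := by
    intro ψ hψ
    rw [charSum, sum_biUnion hdisj]
    exact sum_eq_zero_of_mul_conj_sum_sub (by omega)
      (by exact_mod_cast h.lam_pos hk (by omega)) (h.charSum_mul_conj hψ)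
  have hne : univ.biUnion D ≠ univ := fun hU => by
    rw [hU, card_univ, h.1] at hcard
    omega
  have hempty := congrArg card (eq_empty_of_charSum_eq_zero hS hne)
  rw [hcard, card_empty] at hempty
  exact absurd hempty (Nat.mul_pos hk (by omega)).ne'

end

theorem mul_pred_lt_of_pred_mul_sq_eq {v p q m k lam : ℕ} (hv : v = p * q)
    (hcount : (m - 1) * k ^ 2 = (v - 1) * lam) (hlam : 0 < lam) (hk : 0 < k)
    (hdvd : p ∣ k) (hkm : k * m < v) : p * (v - 1) < k * q := by
  have hcop : Nat.Coprime (p ^ 2) (v - 1) := by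
    refine Nat.Coprime.pow_left 2 (Nat.isCoprime_iff_coprime.1 ⟨q, -1, ?_⟩)
    rw [Nat.cast_sub (by omega), hv]
    push_cast
    ring
  have hsq : p ^ 2 ∣ lam :=
    hcop.dvd_of_dvd_mul_left (hcount ▸ Dvd.dvd.mul_left (pow_dvd_pow_of_dvd hdvd 2) _)
  have hmk : (m - 1) * k < v := by
    calc (m - 1) * k ≤ k * m := by rw [mul_comm]; exact Nat.mul_le_mul_left k (Nat.sub_le m 1)
      _ < v := hkm
  refine Nat.lt_of_mul_lt_mul_left (a := p) ?_
  calc p * (p * (v - 1)) = p ^ 2 * (v - 1) := by ring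
    _ ≤ lam * (v - 1) := Nat.mul_le_mul_right _ (Nat.le_of_dvd hlam hsq)
    _ = (m - 1) * k * k := by rw [mul_comm, ← hcount]; ring
    _ < v * k := Nat.mul_lt_mul_of_pos_right hmk hk
    _ = p * (k * q) := by rw [hv]; ring

theorem stmt_18_general (G : Type) [CommGroup G] [Fintype G] [DecidableEq G]
    (v m k lam p q : ℕ)
    (hv : v = p * q) (hk : 1 < k) (hm : 2 < m) (hdvd : p ∣ k) (hkm : k * m < v)
    (D : Fin m → Finset G) (h : IsSEDF G v m k lam D) :
    (k : ℝ) > p * (v - 1) / q ∧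
    (p : ℝ) / q ≤ 1 / 5 + 1 / (5 * (v - 1)) := by
  have hm5 := h.five_le (by omega) hm hkm
  have hkey : p * (v - 1) < k * q :=
    mul_pred_lt_of_pred_mul_sq_eq hv (h.pred_mul_sq_eq (by omega))
      (h.lam_pos (by omega) (by omega)) (by omega) hdvd hkm
  have hq : (0 : ℝ) < q := by
    have : 0 < q := Nat.pos_of_ne_zero fun hq0 => by simp [hq0] at hv; omega
    exact_mod_cast this
  have hv1 : (0 : ℝ) < v - 1 := by
    have : (1 : ℝ) < v := by exact_mod_cast (show 1 < v by nlinarith)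
    linarith
  have hkey' : (p : ℝ) * (v - 1) < k * q := by
    have := (Nat.cast_lt (α := ℝ)).2 hkey
    rwa [Nat.cast_mul, Nat.cast_sub (by omega), Nat.cast_mul, Nat.cast_one] at this
  have h5k : 5 * (k : ℝ) ≤ v := by exact_mod_cast (show 5 * k ≤ v by nlinarith)
  refine ⟨(div_lt_iff₀ hq).2 hkey', ?_⟩
  calc (p : ℝ) / q ≤ k / (v - 1) := by rw [div_le_div_iff₀ hq hv1]; linarith
    _ ≤ v / 5 / (v - 1) := by gcongr; linarith
    _ = 1 / 5 + 1 / (5 * (v - 1)) := by field_simp; ring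

theorem stmt_18 (G : Type) [CommGroup G] [Fintype G] [DecidableEq G]
    (v m k lam p q : ℕ) (hp : p.Prime) (hq : q.Prime) (hpq : p ≠ q)
    (hv : v = p * q) (hk : 1 < k) (hm : 2 < m) (hdvd : p ∣ k) (hkm : k * m < v)
    (D : Fin m → Finset G) (h : IsSEDF G v m k lam D) :
    (k : ℝ) > p * (v - 1) / q ∧
    (p : ℝ) / q ≤ 1 / 5 + 1 / (5 * (v - 1)) :=
  stmt_18_general G v m k lam p q hv hk hm hdvd hkm D h
end
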